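/- arXiv:0812.0067 — 2 statements merged into one kernel-verified Lean document; each statement's English description precedes it below -/
import Mathlib

section
/- Let F = (f_ω)_{ω ∈ ∂B} be a border basis for B connected to 1, with commuting multiplication operators, and let π^e_F be the induced global projection. For any monomial m = x_{i_1}···x_{i_k}, the reduction admits the decomposition m − π^e_F(m) = Σ_{l=1}^{k} x_{i_1}···x_{i_{l-1}} Σ_{ω ∈ ∂B} μ^{i_l}_{x_{i_{l+1}}···x_{i_k}, ω} f_ω, where for b ∈ ⟨B⟩, x_i b − π_F(x_i b) = Σ_ω μ^i_{b,ω} f_ω with μ^i_{b,ω} ∈ K. In particular m − π^e_F(m) lies in the K[x]-module generated by F with explicitly bounded-degree coefficients (each coefficient has total degree < k). -/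
open MvPolynomial
open scoped Classical

abbrev Mon (n : ℕ) := Fin n →₀ ℕ

def prolong {n : ℕ} (B : Set (Mon n)) : Set (Mon n) :=
  B ∪ ⋃ i : Fin n, (fun m => Finsupp.single i 1 + m) '' B

def border {n : ℕ} (B : Set (Mon n)) : Set (Mon n) := prolong B \ B

noncomputable def varsSum {n : ℕ} (L : List (Fin n)) : Mon n :=
  (L.map fun i => Finsupp.single i 1).sum

def ConnectedTo1 {n : ℕ} (B : Set (Mon n)) : Prop :=
  0 ∈ B ∧ ∀ m ∈ B, ∃ L : List (Fin n), varsSum L = m ∧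
    ∀ L' : List (Fin n), L' <+: L → varsSum L' ∈ B

def degSum {n : ℕ} (m : Mon n) : ℕ := m.sum fun _ e => e
noncomputable def spanMon {n : ℕ} (K : Type) [Field K] (B : Set (Mon n)) :
    Submodule K (MvPolynomial (Fin n) K) :=
  Submodule.span K ((fun m => (monomial m (1 : K) : MvPolynomial (Fin n) K)) '' B)

noncomputable def piF {n : ℕ} {K : Type} [Field K] (B H : Set (Mon n))
    (ρ : Mon n → MvPolynomial (Fin n) K) (p : MvPolynomial (Fin n) K) :
    MvPolynomial (Fin n) K :=
  p.support.sum fun m =>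
    if m ∈ B then monomial m (p.coeff m)
    else if m ∈ H then p.coeff m • ρ m else 0

noncomputable def redList {n : ℕ} {K : Type} [Field K] (B H : Set (Mon n))
    (ρ : Mon n → MvPolynomial (Fin n) K) : List (Fin n) → MvPolynomial (Fin n) K
  | [] => 1
  | i :: L => piF B H ρ (X i * redList B H ρ L)

def DefinedOn {n : ℕ} {K : Type} [Field K] (B H : Set (Mon n))
    (p : MvPolynomial (Fin n) K) : Prop :=
  ↑p.support ⊆ B ∪ H

def RedDefined {n : ℕ} {K : Type} [Field K] (B H : Set (Mon n))
    (ρ : Mon n → MvPolynomial (Fin n) K) : List (Fin n) → Prop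
  | [] => True
  | i :: L => RedDefined B H ρ L ∧ DefinedOn B H (X i * redList B H ρ L)

def Eset {n : ℕ} {K : Type} [Field K] (B H : Set (Mon n))
    (ρ : Mon n → MvPolynomial (Fin n) K) : Set (Mon n) :=
  { m | ∀ L : List (Fin n), varsSum L = m → RedDefined B H ρ L }

/-! With `r_L := redList B (border B) ρ L` one has `r_{i :: L} = π(x_i r_L)`, hence
`x^{i :: L} - r_{i :: L} = x_i (x^L - r_L) + (x_i r_L - π(x_i r_L))`, and unrolling this
telescopes into the decomposition. Since `0 ∈ B` and `π` lands in `⟨B⟩`, every `r_L` lies in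
`⟨B⟩`, so `x_i r_L` is supported on `B ∪ ∂B`, where `p - π(p) = ∑_{ω ∈ ∂B} p_ω f_ω`. The
coefficient of `f_ω` in the `l`-th summand is a scalar times the prefix `x_{i_1} ⋯ x_{i_{l-1}}`,
of degree `< k`. -/

section Reduction

variable {n : ℕ} {K : Type} [Field K]

theorem varsSum_cons (i : Fin n) (L : List (Fin n)) :
    varsSum (i :: L) = Finsupp.single i 1 + varsSum L := by
  simp [varsSum]

theorem monomial_varsSum_cons (i : Fin n) (L : List (Fin n)) :
    monomial (varsSum (i :: L)) (1 : K) = X i * monomial (varsSum L) 1 := by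
  rw [varsSum_cons, monomial_single_add, pow_one]

theorem totalDegree_monomial_varsSum (L : List (Fin n)) :
    (monomial (varsSum L) (1 : K)).totalDegree = L.length := by
  rw [totalDegree_monomial _ one_ne_zero]
  change Finsupp.degree (varsSum L) = L.length
  simp [varsSum, map_list_sum, Function.comp_def]

theorem prolong_eq_union_border (B : Set (Mon n)) : prolong B = B ∪ border B :=
  (Set.union_sdiff_cancel Set.subset_union_left).symm

theorem support_X_mul_subset_prolong {B : Set (Mon n)} {r : MvPolynomial (Fin n) K}
    (hr : ↑r.support ⊆ B) (i : Fin n) : ↑(X i * r).support ⊆ prolong B := by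
  intro m hm
  simp only [Finset.mem_coe, support_X_mul, Finset.mem_map, addLeftEmbedding_apply] at hm
  obtain ⟨a, ha, rfl⟩ := hm
  exact Or.inr (Set.mem_iUnion.2 ⟨i, a, hr ha, rfl⟩)

variable {B H : Set (Mon n)} {ρ : Mon n → MvPolynomial (Fin n) K}

theorem support_piF_subset (hρ : ∀ ω ∈ H, ↑(ρ ω).support ⊆ B) (p : MvPolynomial (Fin n) K) :
    ↑(piF B H ρ p).support ⊆ B := by
  refine Finset.sum_induction _ (fun q : MvPolynomial (Fin n) K => ↑q.support ⊆ B)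
    (fun q q' hq hq' => (Finset.coe_subset.2 support_add).trans (by simpa using ⟨hq, hq'⟩))
    (by simp) fun m _ => ?_
  split_ifs with hmB hmH
  · exact (Finset.coe_subset.2 (support_monomial_subset)).trans (by simpa using hmB)
  · exact (Finset.coe_subset.2 Finsupp.support_smul).trans (hρ m hmH)
  · simp

theorem support_redList_subset (h0 : (0 : Mon n) ∈ B) (hρ : ∀ ω ∈ H, ↑(ρ ω).support ⊆ B) :
    ∀ L : List (Fin n), ↑(redList B H ρ L).support ⊆ B
  | [] => by simpa [redList] using h0
  | _ :: _ => support_piF_subset hρ _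

theorem sub_piF_eq_sum (hBH : Disjoint B H) {p : MvPolynomial (Fin n) K}
    (hp : ↑p.support ⊆ B ∪ H) :
    p - piF B H ρ p =
      ∑ ω ∈ p.support, if ω ∈ H then p.coeff ω • (monomial ω (1 : K) - ρ ω) else 0 := by
  conv_lhs => enter [1]; rw [← support_sum_monomial_coeff p]
  rw [piF, ← Finset.sum_sub_distrib]
  refine Finset.sum_congr rfl fun m hm => ?_
  rcases hp hm with hmB | hmH
  · simp [hmB, Set.disjoint_left.1 hBH hmB]
  · simp [hmH, Set.disjoint_right.1 hBH hmH, smul_sub, smul_monomial]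

theorem monomial_varsSum_sub_redList (L : List (Fin n)) :
    monomial (varsSum L) (1 : K) - redList B H ρ L =
      ∑ l : Fin L.length, monomial (varsSum (L.take l)) (1 : K) *
        (X (L.get l) * redList B H ρ (L.drop (l + 1)) -
          piF B H ρ (X (L.get l) * redList B H ρ (L.drop (l + 1)))) := by
  induction L with
  | nil => simp [varsSum, redList]
  | cons i L ih =>
    refine Eq.trans ?_ (Fin.sum_univ_succ _).symm
    simp only [Fin.val_zero, Fin.val_succ, List.take_zero, List.take_succ_cons, List.get_cons_zero,
      List.get_cons_succ', List.drop_succ_cons, zero_add, List.drop_zero, monomial_varsSum_cons,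
      mul_assoc, ← Finset.mul_sum, ← ih]
    simp only [varsSum, redList, List.map_nil, List.sum_nil, monomial_zero', C_1, one_mul]
    ring

theorem monomial_varsSum_sub_redList_border (hB : (0 : Mon n) ∈ B)
    (hρ : ∀ ω ∈ border B, ↑(ρ ω).support ⊆ B) (L : List (Fin n)) :
    monomial (varsSum L) (1 : K) - redList B (border B) ρ L =
      ∑ l : Fin L.length, monomial (varsSum (L.take l)) (1 : K) *
        ∑ ω ∈ (X (L.get l) * redList B (border B) ρ (L.drop (l + 1))).support,
          if ω ∈ border B then
            (X (L.get l) * redList B (border B) ρ (L.drop (l + 1))).coeff ω •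
              (monomial ω (1 : K) - ρ ω)
          else 0 := by
  rw [monomial_varsSum_sub_redList]
  refine Finset.sum_congr rfl fun l _ =>
    congrArg _ (sub_piF_eq_sum (H := border B) Set.disjoint_sdiff_right ?_)
  rw [← prolong_eq_union_border]
  exact support_X_mul_subset_prolong (support_redList_subset hB hρ _) _

end Reduction

theorem exists_sum_mul_eq_sum_mul_sum {σ κ ι R : Type*} [Fintype ι] [DecidableEq κ]
    [CommSemiring R]
    (a : ι → MvPolynomial σ R) (t : ι → Finset κ) (d : ι → κ → R)
    (f : κ → MvPolynomial σ R) {N : ℕ} (ha : ∀ l, (a l).totalDegree < N) :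
    ∃ c : κ → MvPolynomial σ R, (∀ ω ∈ Finset.univ.biUnion t, (c ω).totalDegree < N) ∧
      ∑ l, a l * ∑ ω ∈ t l, d l ω • f ω = ∑ ω ∈ Finset.univ.biUnion t, c ω * f ω := by
  refine ⟨fun ω => ∑ l, if ω ∈ t l then d l ω • a l else 0, fun ω hω => ?_, ?_⟩
  · obtain ⟨l₀, -, hl₀⟩ := Finset.mem_biUnion.1 hω
    refine (totalDegree_finsetSum _ _).trans_lt
      ((Finset.sup_lt_iff ((Nat.zero_le _).trans_lt (ha l₀))).2 fun l _ => ?_)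
    split_ifs
    · exact (totalDegree_smul_le _ _).trans_lt (ha l)
    · exact (Nat.zero_le _).trans_lt (ha l₀)
  · simp only [Finset.sum_mul, ite_mul, zero_mul, smul_mul_assoc]
    rw [Finset.sum_comm]
    refine Finset.sum_congr rfl fun l _ => ?_
    rw [Finset.sum_ite_mem, Finset.inter_eq_right.2 (Finset.subset_biUnion_of_mem t
      (Finset.mem_univ l)), Finset.mul_sum]
    simp only [mul_smul_comm]

theorem stmt11_general {n : ℕ} {K : Type} [Field K] (B : Set (Mon n))
    (ρ : Mon n → MvPolynomial (Fin n) K)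
    (hB : ConnectedTo1 B)
    (hρ : ∀ ω ∈ border B, ↑(ρ ω).support ⊆ B) :
    ∀ L : List (Fin n),
      (monomial (varsSum L) (1 : K) - redList B (border B) ρ L =
        ∑ l : Fin L.length,
          (monomial (varsSum (L.take (l : ℕ))) (1 : K)) *
            ∑ ω ∈ (X (L.get l) * redList B (border B) ρ (L.drop ((l : ℕ) + 1))).support,
              if ω ∈ border B then
                ((X (L.get l) * redList B (border B) ρ (L.drop ((l : ℕ) + 1))).coeff ω) •
                  (monomial ω (1 : K) - ρ ω)
              else 0) ∧
      ∃ (s : Finset (Mon n)) (c : Mon n → MvPolynomial (Fin n) K),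
        ↑s ⊆ border B ∧ (∀ ω ∈ s, (c ω).totalDegree < L.length) ∧
        monomial (varsSum L) (1 : K) - redList B (border B) ρ L =
          ∑ ω ∈ s, c ω * (monomial ω 1 - ρ ω) := by
  intro L
  have hdecomp := monomial_varsSum_sub_redList_border hB.1 hρ L
  set p := fun l : Fin L.length => X (L.get l) * redList B (border B) ρ (L.drop (l + 1))
  obtain ⟨c, hc, hsum⟩ := exists_sum_mul_eq_sum_mul_sum
    (fun l : Fin L.length => monomial (varsSum (L.take l)) (1 : K))
    (fun l => (p l).support.filter (· ∈ border B)) (fun l => (p l).coeff)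
    (fun ω => monomial ω 1 - ρ ω) (N := L.length)
    fun l => by
      rw [totalDegree_monomial_varsSum, List.length_take]
      exact min_lt_of_left_lt l.isLt
  refine ⟨hdecomp, _, c, fun ω hω => ?_, hc, ?_⟩
  · obtain ⟨l, -, hl⟩ := Finset.mem_biUnion.1 hω
    exact (Finset.mem_filter.1 hl).2
  · rw [hdecomp, ← hsum]
    simp only [p, Finset.sum_filter]

/-- decomposition of m − π^e_F(m) along a border basis (equation (5)):
    m − π^e_F(m) = Σ_{l} x_{i₁}···x_{i_{l-1}} Σ_ω μ^{i_l}_{x_{i_{l+1}}···x_{i_k},ω} f_ω,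
    and in particular the coefficients have total degree < k. -/
theorem stmt11 {n : ℕ} {K : Type} [Field K] (B : Set (Mon n))
    (ρ : Mon n → MvPolynomial (Fin n) K)
    (hB : ConnectedTo1 B)
    (hρ : ∀ ω ∈ border B, ↑(ρ ω).support ⊆ B)
    (hcomm : ∀ b ∈ spanMon K B, ∀ i j : Fin n,
      piF B (border B) ρ (X i * piF B (border B) ρ (X j * b)) =
      piF B (border B) ρ (X j * piF B (border B) ρ (X i * b))) :
    ∀ L : List (Fin n),
      (monomial (varsSum L) (1 : K) - redList B (border B) ρ L =
        ∑ l : Fin L.length,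
          (monomial (varsSum (L.take (l : ℕ))) (1 : K)) *
            ∑ ω ∈ (X (L.get l) * redList B (border B) ρ (L.drop ((l : ℕ) + 1))).support,
              if ω ∈ border B then
                ((X (L.get l) * redList B (border B) ρ (L.drop ((l : ℕ) + 1))).coeff ω) •
                  (monomial ω (1 : K) - ρ ω)
              else 0) ∧
      ∃ (s : Finset (Mon n)) (c : Mon n → MvPolynomial (Fin n) K),
        ↑s ⊆ border B ∧ (∀ ω ∈ s, (c ω).totalDegree < L.length) ∧
        monomial (varsSum L) (1 : K) - redList B (border B) ρ L =
          ∑ ω ∈ s, c ω * (monomial ω 1 - ρ ω) :=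
  stmt11_general B ρ hB hρ
end

section
/- Let F = (f_ω)_{ω ∈ ∂B} be a border basis for B connected to 1 with commuting multiplication operators, and let Ξ ⊆ K[x]^{∂B} be the submodule generated by the commutation syzygies x_{i_1} μ^{i_2}(m) + μ^{i_1}(x_{i_2} m) − x_{i_2} μ^{i_1}(m) − μ^{i_2}(x_{i_1} m) for m ∈ B and i_1, i_2 ∈ {1,...,n}, where μ^i(p) = Σ_ω μ^i_{p,ω} e_ω. If m = x_{i_1}···x_{i_k} = x_{j_1}···x_{j_k} are two decompositions of the same monomial as products of variables, then Ξ_{x_{i_1},...,x_{i_k}} − Ξ_{x_{j_1},...,x_{j_k}} ∈ Ξ, where Ξ_{x_{i_1},...,x_{i_k}} = Σ_{l=1}^{k} x_{i_1}···x_{i_{l-1}} Σ_ω μ^{i_l}_{x_{i_{l+1}}···x_{i_k},ω} e_ω. -/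
open MvPolynomial
open scoped Classical

/-- μ^i(q) ∈ K[x]^(∂B): the vector of coefficients μ^i_{q,ω} = coeff_ω(x_i·q)
    (for q ∈ ⟨B⟩) expressing x_i·q − π_F(x_i·q) = Σ_ω μ^i_{q,ω} f_ω. -/
noncomputable def muF {n : ℕ} {K : Type} [Field K] (B : Set (Mon n)) (i : Fin n)
    (q : MvPolynomial (Fin n) K) : Mon n →₀ MvPolynomial (Fin n) K :=
  ∑ ω ∈ (X i * q).support,
    if ω ∈ border B then
      Finsupp.single ω (C ((X i * q).coeff ω) : MvPolynomial (Fin n) K)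
    else 0

/-- The generators of the module Ξ of commutation syzygies:
    x_{i₁} μ^{i₂}(m) + μ^{i₁}(x_{i₂}m) − x_{i₂} μ^{i₁}(m) − μ^{i₂}(x_{i₁}m), m ∈ B. -/
noncomputable def XiGen {n : ℕ} {K : Type} [Field K] (B : Set (Mon n))
    (ρ : Mon n → MvPolynomial (Fin n) K) :
    Set (Mon n →₀ MvPolynomial (Fin n) K) :=
  { v | ∃ m ∈ B, ∃ i1 i2 : Fin n,
    v = (X i1 : MvPolynomial (Fin n) K) • muF B i2 (monomial m (1 : K))
      + muF B i1 (piF B (border B) ρ (X i2 * monomial m (1 : K)))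
      - (X i2 : MvPolynomial (Fin n) K) • muF B i1 (monomial m (1 : K))
      - muF B i2 (piF B (border B) ρ (X i1 * monomial m (1 : K))) }

/-- The vector Ξ_{x_{i₁},…,x_{i_k}} ∈ K[x]^(∂B) attached to a decomposition of a
    monomial as a product of variables. -/
noncomputable def XiList {n : ℕ} {K : Type} [Field K] (B : Set (Mon n))
    (ρ : Mon n → MvPolynomial (Fin n) K) (L : List (Fin n)) :
    Mon n →₀ MvPolynomial (Fin n) K :=
  ∑ l : Fin L.length,
    (monomial (varsSum (L.take (l : ℕ))) (1 : K) : MvPolynomial (Fin n) K) •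
      muF B (L.get l) (redList B (border B) ρ (L.drop ((l : ℕ) + 1)))

/-! Two decompositions of the same monomial are permutations of each other, and a permutation
is a product of adjacent transpositions. Exchanging the first two letters of `y :: x :: l`
changes `Ξ` by exactly the commutation syzygy of `redList l ∈ ⟨B⟩` for the pair `(y, x)`; the
syzygy is `K`-linear, so it lies in the module generated by the syzygies of the monomials of
`B`. A common first letter `x` multiplies the difference by `x`, and the reductions of the two
tails agree because the multiplication operators commute. -/

section BorderBasis

variable {n : ℕ} {K : Type} [Field K]

theorem mem_spanMon_iff {B : Set (Mon n)} {p : MvPolynomial (Fin n) K} :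
    p ∈ spanMon K B ↔ ↑p.support ⊆ B := by
  rw [spanMon, ← restrictSupport_eq_span, mem_restrictSupport_iff]

theorem piF_eq_constr (B H : Set (Mon n)) (ρ : Mon n → MvPolynomial (Fin n) K)
    (p : MvPolynomial (Fin n) K) :
    piF B H ρ p = (basisMonomials (Fin n) K).constr K
      (fun m => if m ∈ B then monomial m 1 else if m ∈ H then ρ m else 0) p := by
  rw [Module.Basis.constr_apply, piF, Finsupp.sum]
  refine Finset.sum_congr rfl fun m _ => ?_
  split_ifs <;> simp [smul_monomial, coeff, basisMonomials]

theorem muF_eq_constr (B : Set (Mon n)) (i : Fin n) (q : MvPolynomial (Fin n) K) :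
    muF B i q = (basisMonomials (Fin n) K).constr K
      (fun ω => if ω ∈ border B then Finsupp.single ω 1 else 0) (X i * q) := by
  rw [Module.Basis.constr_apply, muF, Finsupp.sum]
  refine Finset.sum_congr rfl fun ω _ => ?_
  split_ifs <;> simp [Finsupp.smul_single, smul_eq_C_mul, coeff, basisMonomials]

theorem piF_add (B H : Set (Mon n)) (ρ : Mon n → MvPolynomial (Fin n) K)
    (p q : MvPolynomial (Fin n) K) : piF B H ρ (p + q) = piF B H ρ p + piF B H ρ q := by
  simp only [piF_eq_constr, map_add]

theorem piF_smul (B H : Set (Mon n)) (ρ : Mon n → MvPolynomial (Fin n) K) (c : K)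
    (p : MvPolynomial (Fin n) K) : piF B H ρ (c • p) = c • piF B H ρ p := by
  simp only [piF_eq_constr, map_smul]

theorem muF_add (B : Set (Mon n)) (i : Fin n) (p q : MvPolynomial (Fin n) K) :
    muF B i (p + q) = muF B i p + muF B i q := by
  simp only [muF_eq_constr, mul_add, map_add]

theorem muF_smul (B : Set (Mon n)) (i : Fin n) (c : K) (p : MvPolynomial (Fin n) K) :
    muF B i (c • p) = c • muF B i p := by
  simp only [muF_eq_constr, mul_smul_comm, map_smul]

theorem piF_mem_spanMon {B : Set (Mon n)} {ρ : Mon n → MvPolynomial (Fin n) K}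
    (hρ : ∀ ω ∈ border B, ↑(ρ ω).support ⊆ B) (p : MvPolynomial (Fin n) K) :
    piF B (border B) ρ p ∈ spanMon K B := by
  rw [piF_eq_constr]
  refine Submodule.span_le.mpr ?_ ((Module.Basis.constr_range _ K).le ⟨p, rfl⟩)
  rintro _ ⟨m, rfl⟩
  dsimp only
  split_ifs with hB hH
  · exact Submodule.subset_span ⟨m, hB, rfl⟩
  · exact mem_spanMon_iff.2 (hρ m hH)
  · exact zero_mem _

theorem redList_mem_spanMon {B : Set (Mon n)} {ρ : Mon n → MvPolynomial (Fin n) K}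
    (h0 : (0 : Mon n) ∈ B) (hρ : ∀ ω ∈ border B, ↑(ρ ω).support ⊆ B) :
    ∀ L : List (Fin n), redList B (border B) ρ L ∈ spanMon K B
  | [] => by
    rw [redList, one_def]
    exact Submodule.subset_span ⟨0, h0, rfl⟩
  | _ :: _ => piF_mem_spanMon hρ _

theorem redList_eq_of_perm {B : Set (Mon n)} {ρ : Mon n → MvPolynomial (Fin n) K}
    (h0 : (0 : Mon n) ∈ B) (hρ : ∀ ω ∈ border B, ↑(ρ ω).support ⊆ B)
    (hcomm : ∀ b ∈ spanMon K B, ∀ i j : Fin n,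
      piF B (border B) ρ (X i * piF B (border B) ρ (X j * b)) =
      piF B (border B) ρ (X j * piF B (border B) ρ (X i * b)))
    {L L' : List (Fin n)} (hp : L.Perm L') :
    redList B (border B) ρ L = redList B (border B) ρ L' := by
  induction hp with
  | nil => rfl
  | cons x _ ih => rw [redList, redList, ih]
  | swap x y L => exact hcomm _ (redList_mem_spanMon h0 hρ L) y x
  | trans _ _ ih₁ ih₂ => rw [ih₁, ih₂]

/-- The generators `XiGen B ρ` of `Ξ` are its values at the monomials of `B`. -/
noncomputable def commSyzygy (B : Set (Mon n)) (ρ : Mon n → MvPolynomial (Fin n) K)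
    (i j : Fin n) (q : MvPolynomial (Fin n) K) : Mon n →₀ MvPolynomial (Fin n) K :=
  (X i : MvPolynomial (Fin n) K) • muF B j q + muF B i (piF B (border B) ρ (X j * q))
    - (X j : MvPolynomial (Fin n) K) • muF B i q - muF B j (piF B (border B) ρ (X i * q))

theorem commSyzygy_mem_span {B : Set (Mon n)} (ρ : Mon n → MvPolynomial (Fin n) K) (i j : Fin n)
    {q : MvPolynomial (Fin n) K} (hq : q ∈ spanMon K B) :
    commSyzygy B ρ i j q ∈ Submodule.span (MvPolynomial (Fin n) K) (XiGen B ρ) := by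
  induction hq using Submodule.span_induction with
  | mem _ hx =>
    obtain ⟨m, hm, rfl⟩ := hx
    exact Submodule.subset_span ⟨m, hm, i, j, rfl⟩
  | zero => simp [commSyzygy, muF_eq_constr, piF_eq_constr]
  | add a b _ _ ha hb =>
    convert add_mem ha hb using 1
    simp only [commSyzygy, mul_add, piF_add, muF_add, smul_add]
    abel
  | smul c a _ ha =>
    convert Submodule.smul_of_tower_mem _ c ha using 1
    simp only [commSyzygy, mul_smul_comm, piF_smul, muF_smul, smul_sub, smul_add, smul_comm c]

theorem varsSum_eq_toFinsupp (L : List (Fin n)) :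
    varsSum L = Multiset.toFinsupp (L : Multiset (Fin n)) := by
  induction L with
  | nil => rfl
  | cons i L ih =>
    rw [← Multiset.cons_coe, ← Multiset.singleton_add, Multiset.toFinsupp_add,
      Multiset.toFinsupp_singleton, ← ih]
    simp [varsSum]

theorem perm_of_varsSum_eq {L L' : List (Fin n)} (h : varsSum L = varsSum L') : L.Perm L' := by
  rw [varsSum_eq_toFinsupp, varsSum_eq_toFinsupp] at h
  exact Multiset.coe_eq_coe.1 (Multiset.toFinsupp.injective h)

theorem XiList_cons (B : Set (Mon n)) (ρ : Mon n → MvPolynomial (Fin n) K)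
    (i : Fin n) (L : List (Fin n)) :
    XiList B ρ (i :: L) =
      muF B i (redList B (border B) ρ L) + (X i : MvPolynomial (Fin n) K) • XiList B ρ L := by
  rw [XiList, XiList, Finset.smul_sum]
  change ∑ l : Fin (L.length + 1), _ = _
  rw [Fin.sum_univ_succ]
  congr 1
  · simp [varsSum, monomial_zero']
  · refine Finset.sum_congr rfl fun l _ => ?_
    rw [Fin.val_succ, List.take_succ_cons, varsSum, List.map_cons, List.sum_cons, smul_smul,
      X, monomial_mul, one_mul]
    rfl

theorem XiList_swap (B : Set (Mon n)) (ρ : Mon n → MvPolynomial (Fin n) K)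
    (x y : Fin n) (L : List (Fin n)) :
    XiList B ρ (y :: x :: L) - XiList B ρ (x :: y :: L) =
      commSyzygy B ρ y x (redList B (border B) ρ L) := by
  simp only [XiList_cons, redList, commSyzygy, smul_add, smul_smul, mul_comm (X x) (X y)]
  abel

theorem XiList_sub_mem_span_of_perm {B : Set (Mon n)} {ρ : Mon n → MvPolynomial (Fin n) K}
    (h0 : (0 : Mon n) ∈ B) (hρ : ∀ ω ∈ border B, ↑(ρ ω).support ⊆ B)
    (hcomm : ∀ b ∈ spanMon K B, ∀ i j : Fin n,
      piF B (border B) ρ (X i * piF B (border B) ρ (X j * b)) =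
      piF B (border B) ρ (X j * piF B (border B) ρ (X i * b)))
    {L L' : List (Fin n)} (hp : L.Perm L') :
    XiList B ρ L - XiList B ρ L' ∈ Submodule.span (MvPolynomial (Fin n) K) (XiGen B ρ) := by
  induction hp with
  | nil => simp
  | cons x hp ih =>
    rw [XiList_cons, XiList_cons, redList_eq_of_perm h0 hρ hcomm hp, add_sub_add_left_eq_sub,
      ← smul_sub]
    exact Submodule.smul_mem _ _ ih
  | swap x y L =>
    rw [XiList_swap]
    exact commSyzygy_mem_span ρ y x (redList_mem_spanMon h0 hρ L)
  | trans _ _ ih₁ ih₂ => simpa using add_mem ih₁ ih₂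

end BorderBasis

/-- two decompositions of the same monomial as a product of variables
    yield vectors Ξ that differ by an element of the module Ξ of commutation syzygies. -/
theorem stmt12 {n : ℕ} {K : Type} [Field K] (B : Set (Mon n))
    (ρ : Mon n → MvPolynomial (Fin n) K)
    (hB : ConnectedTo1 B)
    (hρ : ∀ ω ∈ border B, ↑(ρ ω).support ⊆ B)
    (hcomm : ∀ b ∈ spanMon K B, ∀ i j : Fin n,
      piF B (border B) ρ (X i * piF B (border B) ρ (X j * b)) =
      piF B (border B) ρ (X j * piF B (border B) ρ (X i * b))) :
    ∀ L L' : List (Fin n), varsSum L = varsSum L' →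
      XiList B ρ L - XiList B ρ L' ∈
        Submodule.span (MvPolynomial (Fin n) K) (XiGen B ρ) :=
  fun _ _ h => XiList_sub_mem_span_of_perm hB.1 hρ hcomm (perm_of_varsSum_eq h)
end
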